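/- arXiv:1207.2423 — 2 statements merged into one kernel-verified Lean document; each statement's English description precedes it below -/
import Mathlib

section
/- Let G be a finite group, H a subgroup of G with normalizer N, and c ∈ G. Let Σ* be the set of orbits of the action of H × ⟨c⟩ on G given by (h, c^m)·g = h g c^{-m}, with N/H acting by left multiplication. For an irreducible complex representation ρ_α of N/H with character χ_α, the multiplicity m_α of χ_α in the character of the permutation representation of N/H on ℂ^{Σ*} is given by m_α = (1/#N) · Σ_{g ∈ G} n(g)⁻¹ · dim Fix_α(g c^{n(g)} g⁻¹), where n(g) is the least positive integer n such that g c^n g⁻¹ ∈ N, and Fix_α(x) for x ∈ N denotes the fixed subspace of ρ_α applied to the image of x in N/H. -/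
open Module

/-- A representation is irreducible if the space is nonzero and the only invariant
subspaces are `⊥` and `⊤`. -/
def IsIrreducibleRep {k : Type*} [CommRing k] {Γ : Type*} [Group Γ] {V : Type*}
    [AddCommGroup V] [Module k V] (ρ : Representation k Γ V) : Prop :=
  Nontrivial V ∧ ∀ U : Submodule k V, (∀ γ : Γ, ∀ v ∈ U, ρ γ v ∈ U) → U = ⊥ ∨ U = ⊤

/-- The relation on `G` whose classes are the orbits of the action of `H × ⟨c⟩` on
`G` given by `(h, c^m) · g = h g c^(-m)`; the set `Σ*` of vertices of the origami is
the quotient `Quot (vertexRel H c)`. -/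
def vertexRel {G : Type*} [Group G] (H : Subgroup G) (c : G) : G → G → Prop :=
  fun x y => ∃ h ∈ H, ∃ m : ℤ, y = h * x * c ^ m

/-- Left multiplication by an element of `N ≤ normalizer H` on `Σ*`. -/
def vertexActMap {G : Type*} [Group G] {H N : Subgroup G} (hNn : N ≤ Subgroup.normalizer (H : Set G))
    (c : G) (n : ↥N) : Quot (vertexRel H c) → Quot (vertexRel H c) :=
  Quot.map (fun x => (n : G) * x) (by
    rintro x y ⟨h, hh, m, rfl⟩
    exact ⟨(n : G) * h * (n : G)⁻¹,
      ((Subgroup.mem_normalizer_iff.mp (hNn n.2)) h).mp hh, m, by group⟩)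

/-!
Write `b = g c g⁻¹` and `ā` for the image of `g c^{n(g)} g⁻¹ = b^{n(g)}` in `N/H`. Expanding the
fixed-point count and summing over `G` instead of `Σ*`, each vertex `[g]` is counted
`#(H g ⟨c⟩)` times. An element `x ∈ N` fixes `[g]` iff `x b^m ∈ H` for some `m`, i.e. iff its
image lies in `⟨ā⟩`, so the character sum over the stabiliser of `[g]` is
`#H · ∑_{γ ∈ ⟨ā⟩} χ(γ⁻¹) = #H · ord(ā) · dim Fix(ā)`. On the other hand `b^m ∈ H` iff
`n(g) · ord(ā) ∣ m`, so the fibre `H g ⟨c⟩` has `#H · n(g) · ord(ā)` elements, and the ratio of the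
two is `dim Fix(ā) / n(g)`.
-/

section ZPowMem

variable {G : Type*} [Group G]

theorem zpow_mem_iff_dvd_of_minimal (K : Subgroup G) {b : G} {s : ℕ} (hs : 0 < s)
    (hbs : b ^ s ∈ K) (hmin : ∀ m : ℕ, 0 < m → b ^ m ∈ K → s ≤ m) (m : ℤ) :
    b ^ m ∈ K ↔ (s : ℤ) ∣ m := by
  constructor
  · intro hm
    have hs' : (0 : ℤ) < s := by exact_mod_cast hs
    have hrem : b ^ (m % s) ∈ K := by
      rw [Int.emod_def, zpow_sub, zpow_mul, zpow_natCast]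
      exact K.mul_mem hm (K.inv_mem (K.zpow_mem hbs _))
    by_contra hndvd
    have hpos : 0 < m % s := lt_of_le_of_ne (Int.emod_nonneg m hs'.ne')
      (fun h => hndvd (Int.dvd_of_emod_eq_zero h.symm))
    have := hmin (m % s).toNat (by omega) (by rwa [← zpow_natCast, Int.toNat_of_nonneg hpos.le])
    have := Int.emod_lt_of_pos m hs'
    omega
  · rintro ⟨j, rfl⟩
    rw [zpow_mul, zpow_natCast]
    exact K.zpow_mem hbs j

theorem zpow_mem_iff_dvd_mul_orderOf {K L : Subgroup G} [(K.subgroupOf L).Normal] (hKL : K ≤ L)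
    {b : G} {n : ℕ} (hL : ∀ m : ℤ, b ^ m ∈ L ↔ (n : ℤ) ∣ m) (a : L) (ha : (a : G) = b ^ n)
    (m : ℤ) :
    b ^ m ∈ K ↔ ((n * orderOf (QuotientGroup.mk a : L ⧸ K.subgroupOf L) : ℕ) : ℤ) ∣ m := by
  have hpow (j : ℤ) : b ^ ((n : ℤ) * j) ∈ K ↔
      (orderOf (QuotientGroup.mk a : L ⧸ K.subgroupOf L) : ℤ) ∣ j := by
    rw [orderOf_dvd_iff_zpow_eq_one, ← QuotientGroup.mk_zpow, QuotientGroup.eq_one_iff,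
      Subgroup.mem_subgroupOf, SubgroupClass.coe_zpow, ha, zpow_mul, zpow_natCast]
  constructor
  · intro hm
    obtain ⟨j, rfl⟩ := (hL m).mp (hKL hm)
    push_cast
    exact mul_dvd_mul_left _ ((hpow j).mp hm)
  · rintro ⟨j, rfl⟩
    push_cast
    rw [mul_assoc, hpow]
    exact dvd_mul_right _ _

theorem exists_mul_zpow_mem_iff_mem_zpowers {K L : Subgroup G} [(K.subgroupOf L).Normal]
    (hKL : K ≤ L) {b : G} {n : ℕ} (hL : ∀ m : ℤ, b ^ m ∈ L ↔ (n : ℤ) ∣ m) (a : L)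
    (ha : (a : G) = b ^ n) (x : L) :
    (∃ m : ℤ, (x : G) * b ^ m ∈ K) ↔
      (QuotientGroup.mk x : L ⧸ K.subgroupOf L) ∈ Subgroup.zpowers (QuotientGroup.mk a) := by
  have hmk (j : ℤ) : (QuotientGroup.mk x : L ⧸ K.subgroupOf L) * (QuotientGroup.mk a) ^ j = 1 ↔
      (x : G) * b ^ ((n : ℤ) * j) ∈ K := by
    rw [← QuotientGroup.mk_zpow, ← QuotientGroup.mk_mul, QuotientGroup.eq_one_iff,
      Subgroup.mem_subgroupOf, Subgroup.coe_mul, SubgroupClass.coe_zpow, ha, zpow_mul,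
      zpow_natCast]
  constructor
  · rintro ⟨m, hm⟩
    have hbm : b ^ m ∈ L := by simpa using L.mul_mem (L.inv_mem x.2) (hKL hm)
    obtain ⟨j, rfl⟩ := (hL m).mp hbm
    refine ⟨-j, ?_⟩
    dsimp only
    rw [zpow_neg]
    exact (eq_inv_of_mul_eq_one_left ((hmk j).mpr hm)).symm
  · rintro ⟨j, hj⟩
    refine ⟨n * -j, (hmk (-j)).mp ?_⟩
    rw [← hj, ← zpow_add, add_neg_cancel, zpow_zero]

end ZPowMem

theorem QuotientGroup.sum_comp_mk {L M : Type*} [Group L] [Fintype L] [AddCommMonoid M]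
    (K : Subgroup L) [Fintype (L ⧸ K)] (f : L ⧸ K → M) :
    ∑ x : L, f x = Nat.card K • ∑ y : L ⧸ K, f y := by
  classical
  rw [← Finset.sum_fiberwise Finset.univ (QuotientGroup.mk : L → L ⧸ K), Finset.smul_sum]
  refine Finset.sum_congr rfl fun y _ => ?_
  have hcard : (Finset.univ.filter fun x : L => (x : L ⧸ K) = y).card = Nat.card K := by
    simpa [Nat.card_eq_fintype_card, Fintype.card_subtype] using
      QuotientGroup.card_preimage_mk K {y}
  rw [Finset.sum_congr rfl fun x hx => congrArg f (Finset.mem_filter.mp hx).2, Finset.sum_const,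
    hcard]

theorem Fintype.sum_eq_sum_inv_card_fiber {α β R : Type*} [Fintype α] [Fintype β]
    [DivisionSemiring R] [CharZero R] {π : α → β} (hπ : Function.Surjective π) (F : β → R) :
    ∑ b, F b = ∑ a, (Nat.card {a' // π a' = π a} : R)⁻¹ * F (π a) := by
  classical
  rw [← Finset.sum_fiberwise Finset.univ π]
  refine Finset.sum_congr rfl fun b _ => ?_
  obtain ⟨a₀, rfl⟩ := hπ b
  have hcard : (Finset.univ.filter fun a => π a = π a₀).card = Nat.card {a' // π a' = π a₀} := by
    rw [Nat.card_eq_fintype_card, Fintype.card_subtype]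
  have : Nonempty {a' // π a' = π a₀} := ⟨⟨a₀, rfl⟩⟩
  have hpos : (Nat.card {a' // π a' = π a₀} : R) ≠ 0 := Nat.cast_ne_zero.mpr Nat.card_pos.ne'
  rw [Finset.sum_congr rfl fun a ha => by rw [(Finset.mem_filter.mp ha).2], Finset.sum_const,
    hcard, nsmul_eq_mul, ← mul_assoc, mul_inv_cancel₀ hpos, one_mul]

theorem sum_mul_card_fixedPoints_eq_sum_fiber {ι α β R : Type*} [Fintype ι] [Fintype α]
    [Fintype β] [DecidableEq β] [DivisionSemiring R] [CharZero R] {π : α → β}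
    (hπ : Function.Surjective π) (f : ι → β → β) (w : ι → R) :
    ∑ i, w i * Nat.card {b // f i b = b} =
      ∑ a, (Nat.card {a' // π a' = π a} : R)⁻¹ *
        ∑ i, w i * if f i (π a) = π a then 1 else 0 := by
  have hfix (i : ι) : (Nat.card {b // f i b = b} : R) = ∑ b, if f i b = b then 1 else 0 := by
    rw [Nat.card_eq_fintype_card, Fintype.card_subtype, Finset.card_filter]
    push_cast
    rfl
  simp only [hfix, Finset.mul_sum]
  rw [Finset.sum_comm, Fintype.sum_eq_sum_inv_card_fiber hπ]
  simp only [Finset.mul_sum]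

theorem Representation.invariants_comp_zpowers_subtype {k Γ V : Type*} [CommRing k] [Group Γ]
    [AddCommGroup V] [Module k V] (ρ : Representation k Γ V) (a : Γ) :
    Representation.invariants (ρ.comp (Subgroup.zpowers a).subtype) =
      LinearMap.ker (ρ a - 1) := by
  ext v
  rw [Representation.mem_invariants_iff_of_forall_mem_zpowers _ ⟨a, Subgroup.mem_zpowers a⟩,
    LinearMap.mem_ker, LinearMap.sub_apply, sub_eq_zero]
  · rfl
  · rintro ⟨_, i, rfl⟩
    exact ⟨i, Subtype.ext (by simp)⟩

section Trace

variable {k Γ V : Type*} [Field k] [CharZero k] [Group Γ] [Fintype Γ] [AddCommGroup V] [Module k V]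
  [FiniteDimensional k V]

theorem Representation.sum_trace_eq_card_mul_finrank_invariants (ρ : Representation k Γ V) :
    ∑ g, LinearMap.trace k V (ρ g) = Fintype.card Γ * finrank k ρ.invariants := by
  have : Invertible (Fintype.card Γ : k) :=
    invertibleOfNonzero (Nat.cast_ne_zero.mpr Fintype.card_ne_zero)
  rw [← ρ.isProj_averageMap.trace]
  simp [Representation.averageMap, GroupAlgebra.average, map_sum]

theorem Representation.sum_ite_mem_zpowers_trace_inv (ρ : Representation k Γ V) (a : Γ) :
    ∑ y, (if y ∈ Subgroup.zpowers a then LinearMap.trace k V (ρ y⁻¹) else 0) =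
      orderOf a * finrank k (LinearMap.ker (ρ a - 1)) := by
  rw [← Finset.sum_filter, ← Finset.sum_subtype_eq_sum_filter, Finset.subtype_univ,
    ← Fintype.card_zpowers, ← ρ.invariants_comp_zpowers_subtype a,
    ← Representation.sum_trace_eq_card_mul_finrank_invariants]
  exact Fintype.sum_equiv (Equiv.inv _) _ _ fun y => by simp

end Trace

section Origami

variable {G : Type*} [Group G] (H : Subgroup G) (c : G)

theorem vertexRel_equivalence : Equivalence (vertexRel H c) where
  refl x := ⟨1, H.one_mem, 0, by simp⟩
  symm := by
    rintro x y ⟨h, hh, m, rfl⟩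
    exact ⟨h⁻¹, H.inv_mem hh, -m, by group⟩
  trans := by
    rintro x y z ⟨h, hh, m, rfl⟩ ⟨h', hh', m', rfl⟩
    exact ⟨h' * h, H.mul_mem hh' hh, m + m', by group⟩

theorem quot_mk_eq_quot_mk_iff_vertexRel {x y : G} :
    Quot.mk (vertexRel H c) x = Quot.mk (vertexRel H c) y ↔ vertexRel H c x y := by
  rw [Quot.eq, (vertexRel_equivalence H c).eqvGen_iff]

theorem vertexActMap_mk_eq_self_iff {N : Subgroup G} (hNn : N ≤ Subgroup.normalizer (H : Set G))
    (x : N) (g : G) :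
    vertexActMap hNn c x (Quot.mk _ g) = Quot.mk _ g ↔
      ∃ m : ℤ, (x : G) * (g * c * g⁻¹) ^ m ∈ H := by
  change Quot.mk _ ((x : G) * g) = Quot.mk _ g ↔ _
  rw [quot_mk_eq_quot_mk_iff_vertexRel]
  constructor
  · rintro ⟨h, hh, m, hm⟩
    refine ⟨m, ?_⟩
    have : (x : G) * (g * c * g⁻¹) ^ m = h⁻¹ :=
      calc (x : G) * (g * c * g⁻¹) ^ m = h⁻¹ * (h * (x * g) * c ^ m) * g⁻¹ := by
            rw [conj_zpow]; group
        _ = h⁻¹ := by rw [← hm]; group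
    exact this ▸ H.inv_mem hh
  · rintro ⟨m, hm⟩
    exact ⟨((x : G) * (g * c * g⁻¹) ^ m)⁻¹, H.inv_mem hm, m, by rw [conj_zpow]; group⟩

theorem card_vertexRel_fiber {s : ℕ} (hs : 0 < s) {g : G}
    (hH : ∀ m : ℤ, (g * c * g⁻¹) ^ m ∈ H ↔ (s : ℤ) ∣ m) :
    Nat.card {g' // Quot.mk (vertexRel H c) g' = Quot.mk _ g} = Nat.card H * s := by
  let e : H × Fin s → {g' // Quot.mk (vertexRel H c) g' = Quot.mk _ g} := fun p =>
    ⟨p.1 * g * c ^ (p.2 : ℕ), (quot_mk_eq_quot_mk_iff_vertexRel H c).mpr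
      ⟨(p.1 : G)⁻¹, H.inv_mem p.1.2, -((p.2 : ℕ) : ℤ), by group⟩⟩
  have he : Function.Bijective e := by
    constructor
    · rintro ⟨h₁, i₁⟩ ⟨h₂, i₂⟩ heq
      have heq : (h₁ : G) * g * c ^ (i₁ : ℕ) = h₂ * g * c ^ (i₂ : ℕ) := congrArg Subtype.val heq
      have hconj : (g * c * g⁻¹) ^ (((i₂ : ℕ) : ℤ) - (i₁ : ℕ)) = (h₂ : G)⁻¹ * h₁ :=
        calc (g * c * g⁻¹) ^ (((i₂ : ℕ) : ℤ) - (i₁ : ℕ))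
            = (h₂ : G)⁻¹ * (h₂ * g * c ^ (i₂ : ℕ)) * (c ^ (i₁ : ℕ))⁻¹ * g⁻¹ := by
              rw [conj_zpow]; group
          _ = (h₂ : G)⁻¹ * h₁ := by rw [← heq]; group
      have hdvd := (hH _).mp (hconj ▸ H.mul_mem (H.inv_mem h₂.2) h₁.2)
      have hi : i₁ = i₂ := by
        have := Int.eq_zero_of_abs_lt_dvd hdvd (abs_lt.mpr ⟨by omega, by omega⟩)
        omega
      subst hi
      exact Prod.ext (Subtype.ext (mul_right_cancel (mul_right_cancel heq))) rfl
    · rintro ⟨x, hx⟩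
      obtain ⟨h, hh, m, hm⟩ := (quot_mk_eq_quot_mk_iff_vertexRel H c).mp hx
      have hs' : (0 : ℤ) < s := by exact_mod_cast hs
      have hq : (g * c * g⁻¹) ^ ((s : ℤ) * (-m / s)) ∈ H := (hH _).mpr (dvd_mul_right _ _)
      refine ⟨⟨⟨h⁻¹ * (g * c * g⁻¹) ^ ((s : ℤ) * (-m / s)), H.mul_mem (H.inv_mem hh) hq⟩,
        ⟨(-m % s).toNat, by have := Int.emod_lt_of_pos (-m) hs'; omega⟩⟩, Subtype.ext ?_⟩
      change h⁻¹ * (g * c * g⁻¹) ^ ((s : ℤ) * (-m / s)) * g * c ^ (-m % s).toNat = x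
      rw [← zpow_natCast, Int.toNat_of_nonneg (Int.emod_nonneg _ hs'.ne'), Int.emod_def,
        conj_zpow, zpow_sub, hm]
      group
  rw [← Nat.card_congr (Equiv.ofBijective e he), Nat.card_prod, Nat.card_fin]

theorem sum_trace_inv_mul_isFixedPt_vertex {k V : Type*} [Field k] [CharZero k]
    [AddCommGroup V] [Module k V] [FiniteDimensional k V] {N : Subgroup G} [Fintype N]
    [(H.subgroupOf N).Normal] [DecidableEq (Quot (vertexRel H c))] (hHN : H ≤ N)
    (hNn : N ≤ Subgroup.normalizer (H : Set G)) (ρ : Representation k (N ⧸ H.subgroupOf N) V)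
    {g : G} {n : ℕ} (hN : ∀ m : ℤ, (g * c * g⁻¹) ^ m ∈ N ↔ (n : ℤ) ∣ m) (a : N)
    (ha : (a : G) = (g * c * g⁻¹) ^ n) :
    ∑ x : N, LinearMap.trace k V (ρ (QuotientGroup.mk x)⁻¹) *
        (if vertexActMap hNn c x (Quot.mk _ g) = Quot.mk _ g then 1 else 0) =
      Nat.card H * (orderOf (QuotientGroup.mk a : N ⧸ H.subgroupOf N) *
        finrank k (LinearMap.ker (ρ (QuotientGroup.mk a) - 1))) := by
  have : Fintype (N ⧸ H.subgroupOf N) := Fintype.ofFinite _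
  set F : N ⧸ H.subgroupOf N → k := fun y =>
    if y ∈ Subgroup.zpowers (QuotientGroup.mk a) then LinearMap.trace k V (ρ y⁻¹) else 0
  calc _ = ∑ x : N, F x := by
        refine Finset.sum_congr rfl fun x _ => ?_
        simp only [F, vertexActMap_mk_eq_self_iff,
          exists_mul_zpow_mem_iff_mem_zpowers hHN hN a ha, mul_ite, mul_one, mul_zero]
    _ = Nat.card (H.subgroupOf N) • ∑ y, F y := QuotientGroup.sum_comp_mk _ F
    _ = _ := by
        rw [Representation.sum_ite_mem_zpowers_trace_inv, nsmul_eq_mul,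
          Nat.card_congr (Subgroup.subgroupOfEquivOfLe hHN).toEquiv]

end Origami

theorem multiplicity_in_H0_formula_general
    {G : Type*} [Group G] [Fintype G]
    (H : Subgroup G) [Fintype ↥(Subgroup.normalizer (H : Set G))] (c : G)
    {V : Type*} [AddCommGroup V] [Module ℂ V] [FiniteDimensional ℂ V]
    (ρ : Representation ℂ (↥(Subgroup.normalizer (H : Set G)) ⧸ H.subgroupOf (Subgroup.normalizer (H : Set G))) V)
    (n : G → ℕ)
    (hn : ∀ g : G, 0 < n g ∧ g * c ^ n g * g⁻¹ ∈ Subgroup.normalizer (H : Set G) ∧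
      ∀ m : ℕ, 0 < m → g * c ^ m * g⁻¹ ∈ Subgroup.normalizer (H : Set G) → n g ≤ m)
    (mα : ℂ)
    (hmα : mα = (Nat.card ↥(Subgroup.normalizer (H : Set G)) : ℂ)⁻¹ *
      ∑ x : ↥(Subgroup.normalizer (H : Set G)), LinearMap.trace ℂ V (ρ (QuotientGroup.mk x)⁻¹) *
        (Nat.card
          {q : Quot (vertexRel H c) //
            vertexActMap (le_refl (Subgroup.normalizer (H : Set G))) c x q = q} : ℂ)) :
    mα = (Nat.card ↥(Subgroup.normalizer (H : Set G)) : ℂ)⁻¹ *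
      ∑ g : G, (n g : ℂ)⁻¹ *
        (finrank ℂ ↥(LinearMap.ker
          (ρ (QuotientGroup.mk
            (⟨g * c ^ n g * g⁻¹, (hn g).2.1⟩ : ↥(Subgroup.normalizer (H : Set G)))) - 1)) : ℂ) := by
  classical
  have : Fintype (Quot (vertexRel H c)) := Fintype.ofFinite _
  have hN (g : G) (m : ℤ) : (g * c * g⁻¹) ^ m ∈ Subgroup.normalizer (H : Set G) ↔ (n g : ℤ) ∣ m :=
    zpow_mem_iff_dvd_of_minimal _ (hn g).1 (by rw [conj_pow]; exact (hn g).2.1)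
      (fun m hm hmem => (hn g).2.2 m hm (by rwa [conj_pow] at hmem)) m
  have ha (g : G) : g * c ^ n g * g⁻¹ = (g * c * g⁻¹) ^ n g := (conj_pow ..).symm
  rw [hmα, sum_mul_card_fixedPoints_eq_sum_fiber Quot.mk_surjective]
  congr 1
  refine Finset.sum_congr rfl fun g _ => ?_
  rw [sum_trace_inv_mul_isFixedPt_vertex H c Subgroup.le_normalizer le_rfl ρ (hN g)
      ⟨_, (hn g).2.1⟩ (ha g),
    card_vertexRel_fiber H c (Nat.mul_pos (hn g).1 (orderOf_pos _))
      (zpow_mem_iff_dvd_mul_orderOf Subgroup.le_normalizer (hN g) ⟨_, (hn g).2.1⟩ (ha g))]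
  have hH : (Nat.card H : ℂ) ≠ 0 := Nat.cast_ne_zero.mpr Nat.card_pos.ne'
  have hn0 : (n g : ℂ) ≠ 0 := Nat.cast_ne_zero.mpr (hn g).1.ne'
  push_cast
  field_simp
  exact mul_div_cancel_left₀ _ (Nat.cast_ne_zero.mpr (orderOf_pos _).ne')

/-- **The multiplicity of an irreducible representation in `H₀(Σ*, ℂ)`**
(Matheus–Yoccoz–Zmiaikou, Proposition 3.2). Let `G` be a finite group, `H` a
subgroup with normalizer `N`, and `c ∈ G`. Let `Σ*` be the set of orbits of the
action `(h, c^m) · g = h g c^(-m)` of `H × ⟨c⟩` on `G`, with `N/H` acting by left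
multiplication. For an irreducible complex representation `ρ` of `N/H`, the
multiplicity `m_α` of its character in the character of the permutation
representation of `N/H` on `ℂ^{Σ*}` (computed as the character inner product, the
permutation character being the fixed point count) satisfies
`m_α = (1/#N) ∑_{g ∈ G} n(g)⁻¹ dim Fix_α(g c^{n(g)} g⁻¹)`, where `n(g)` is the
least positive integer `n` with `g c^n g⁻¹ ∈ N`. -/
theorem multiplicity_in_H0_formula
    {G : Type*} [Group G] [Fintype G]
    (H : Subgroup G) [Fintype ↥(Subgroup.normalizer (H : Set G))] (c : G)
    {V : Type*} [AddCommGroup V] [Module ℂ V] [FiniteDimensional ℂ V]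
    (ρ : Representation ℂ (↥(Subgroup.normalizer (H : Set G)) ⧸ H.subgroupOf (Subgroup.normalizer (H : Set G))) V)
    (hρ : IsIrreducibleRep ρ)
    (n : G → ℕ)
    (hn : ∀ g : G, 0 < n g ∧ g * c ^ n g * g⁻¹ ∈ Subgroup.normalizer (H : Set G) ∧
      ∀ m : ℕ, 0 < m → g * c ^ m * g⁻¹ ∈ Subgroup.normalizer (H : Set G) → n g ≤ m)
    (mα : ℂ)
    (hmα : mα = (Nat.card ↥(Subgroup.normalizer (H : Set G)) : ℂ)⁻¹ *
      ∑ x : ↥(Subgroup.normalizer (H : Set G)), LinearMap.trace ℂ V (ρ (QuotientGroup.mk x)⁻¹) *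
        (Nat.card
          {q : Quot (vertexRel H c) //
            vertexActMap (le_refl (Subgroup.normalizer (H : Set G))) c x q = q} : ℂ)) :
    mα = (Nat.card ↥(Subgroup.normalizer (H : Set G)) : ℂ)⁻¹ *
      ∑ g : G, (n g : ℂ)⁻¹ *
        (finrank ℂ ↥(LinearMap.ker
          (ρ (QuotientGroup.mk
            (⟨g * c ^ n g * g⁻¹, (hn g).2.1⟩ : ↥(Subgroup.normalizer (H : Set G)))) - 1)) : ℂ) :=
  multiplicity_in_H0_formula_general H c ρ n hn mα hmα
end

section
/- Let G be a finite group generated by two elements g_r and g_u, let c = g_r g_u g_r⁻¹ g_u⁻¹, let H be a subgroup of G containing no nontrivial normal subgroup of G, and let N be the normalizer of H in G. Assume that some conjugate g c g⁻¹ (g ∈ G) does not lie in N. Then: (i) the permutation of the coset space G/N induced by c is an even permutation, and hence ℓ_0 := [G:N] − (number of its orbits) is at least 2; (ii) for every irreducible complex representation ρ_α of N/H, the codimension ℓ_α of the fixed subspace of ψ_α(c) in the representation ψ_α of G induced from the inflation of ρ_α to N is at least 2. -/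
open Module

section Induced

variable {k : Type*} [CommRing k] {G : Type*} [Group G] (N : Subgroup G)
  {V : Type*} [AddCommGroup V] [Module k V]

/-- The space of the representation of `G` induced from a representation `σ` of a
subgroup `N`: functions `f : G → V` with `f (n * g) = σ n (f g)`. -/
def indCarrier (σ : Representation k N V) : Submodule k (G → V) where
  carrier := {f | ∀ (n : N) (g : G), f (↑n * g) = σ n (f g)}
  add_mem' := by
    intro f h hf hh n g
    simp only [Pi.add_apply, hf n g, hh n g, map_add]
  zero_mem' := by
    intro n g
    simp
  smul_mem' := by
    intro a f hf n g
    simp only [Pi.smul_apply, hf n g, map_smul]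

/-- The representation of `G` induced from a representation `σ` of the subgroup `N`,
acting by right translation on `indCarrier N σ`. -/
def indRep (σ : Representation k N V) : Representation k G ↥(indCarrier N σ) where
  toFun x :=
    { toFun := fun f => ⟨fun g => (f : G → V) (g * x), fun n g => by
        simpa [mul_assoc] using f.2 n (g * x)⟩
      map_add' := fun f h => rfl
      map_smul' := fun a f => rfl }
  map_one' := LinearMap.ext fun f => Subtype.ext (funext fun g => by simp)
  map_mul' := fun x y => LinearMap.ext fun f => Subtype.ext (funext fun g => by
    simp [mul_assoc])

end Induced

/-!
Everything follows from one fact about a finite-dimensional complex representation `π` of a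
finite group: if `π` sends a commutator `c` to a nontrivial operator `T`, then the fixed space
of `T` has codimension at least 2. Since `det ∘ π` factors through the abelianization,
`det T = 1`. If `T - 1` had rank one, `T` would act trivially on `W ⧸ range (T - 1)`, so
`det T` would be the eigenvalue of `T` on the line `range (T - 1)`; that eigenvalue is then 1,
so `(T - 1) ^ 2 = 0`, and a unipotent operator of finite order in characteristic zero is `1`.

For the same reason `c` acts on `G ⧸ N` by an even permutation. `ℓ₀` is the codimension for
the permutation representation `ℂ[G ⧸ N]`, whose fixed vectors are the functions constant on
the `⟨c⟩`-orbits, and `ℓ_α` is the codimension for the induced representation. Both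
representations have kernel inside the normal core of `N`, which does not contain `c` since a
conjugate of `c` leaves `N`.
-/

open LinearMap
open scoped commutatorElement

theorem MonoidHom.map_commutatorElement_eq_one {G M : Type*} [Group G] [CommMonoid M]
    (φ : G →* M) (a b : G) : φ ⁅a, b⁆ = 1 := by
  change (φ.toHomUnits ⁅a, b⁆ : M) = 1
  rw [map_commutatorElement, commutatorElement_eq_one_iff_commute.mpr (Commute.all _ _),
    Units.val_one]

theorem IsOfFinOrder.eq_one_of_sq_sub_one_eq_zero {K W : Type*} [Field K] [CharZero K]
    [AddCommGroup W] [Module K W] {T : Module.End K W} (hT : IsOfFinOrder T)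
    (hsq : (T - 1) ^ 2 = 0) : T = 1 := by
  obtain ⟨n, hn, hTn⟩ := hT.exists_pow_eq_one
  have hmul : (T - 1) * T = T - 1 :=
    calc (T - 1) * T = (T - 1) ^ 2 + (T - 1) := by noncomm_ring
      _ = T - 1 := by rw [hsq, zero_add]
  have hpow : ∀ m : ℕ, T ^ m = 1 + (m : K) • (T - 1) := by
    intro m
    induction m with
    | zero => simp
    | succ m ih =>
      rw [pow_succ, ih, add_mul, smul_mul_assoc, hmul, one_mul, Nat.cast_succ, add_smul, one_smul]
      abel
  rw [hpow, add_eq_left, smul_eq_zero] at hTn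
  exact sub_eq_zero.mp (hTn.resolve_left (Nat.cast_ne_zero.mpr hn.ne'))

theorem Module.End.sq_sub_one_eq_zero_of_finrank_range_sub_one_eq_one {K W : Type*} [Field K]
    [AddCommGroup W] [Module K W] [FiniteDimensional K W] {T : Module.End K W}
    (hdet : LinearMap.det T = 1) (hrank : finrank K (range (T - 1)) = 1) : (T - 1) ^ 2 = 0 := by
  set L := range (T - 1)
  have hLT : L ≤ L.comap T := by
    rintro _ ⟨x, rfl⟩
    exact ⟨T x, by simp only [LinearMap.sub_apply, Module.End.one_apply, map_sub]⟩
  have hquot : L.mapQ L T hLT = LinearMap.id := by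
    ext x
    simpa [Submodule.Quotient.eq] using ⟨x, rfl⟩
  obtain ⟨μ, hμ, -⟩ := (T.restrict hLT).existsUnique_eq_smul_id_of_finrank_eq_one hrank
  have hμ1 : μ = 1 := by
    have h := LinearMap.det_eq_det_mul_det L T hLT
    rwa [hdet, hquot, hμ, LinearMap.det_id, mul_one, LinearMap.det_smul, LinearMap.det_id, hrank,
      pow_one, mul_one, eq_comm] at h
  ext x
  have h := congrArg Subtype.val (LinearMap.congr_fun hμ ⟨(T - 1) x, x, rfl⟩)
  simp only [hμ1, one_smul, LinearMap.id_apply, LinearMap.restrict_apply] at h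
  rw [sq, Module.End.mul_apply, LinearMap.sub_apply T 1 ((T - 1) x), h, Module.End.one_apply,
    sub_self, LinearMap.zero_apply]

theorem Module.End.two_le_finrank_sub_finrank_ker_sub_one {K W : Type*} [Field K] [CharZero K]
    [AddCommGroup W] [Module K W] [FiniteDimensional K W] {T : Module.End K W}
    (hT : IsOfFinOrder T) (hdet : LinearMap.det T = 1) (hne : T ≠ 1) :
    2 ≤ finrank K W - finrank K (ker (T - 1)) := by
  have hrank := LinearMap.finrank_range_add_finrank_ker (T - 1)
  suffices 2 ≤ finrank K (range (T - 1)) by omega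
  by_contra! h
  interval_cases hr : finrank K (range (T - 1))
  · exact hne (sub_eq_zero.mp (range_eq_bot.mp (Submodule.finrank_eq_zero.mp hr)))
  · exact hne (hT.eq_one_of_sq_sub_one_eq_zero
      (sq_sub_one_eq_zero_of_finrank_range_sub_one_eq_one hdet hr))

theorem Representation.two_le_finrank_sub_finrank_ker_commutatorElement_sub_one
    {K G W : Type*} [Field K] [CharZero K] [Group G] [Finite G] [AddCommGroup W] [Module K W]
    [FiniteDimensional K W] (π : Representation K G W) {a b : G} (hne : π ⁅a, b⁆ ≠ 1) :
    2 ≤ finrank K W - finrank K (ker (π ⁅a, b⁆ - 1)) :=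
  Module.End.two_le_finrank_sub_finrank_ker_sub_one (π.isOfFinOrder (isOfFinOrder_of_finite _))
    ((LinearMap.det.comp π).map_commutatorElement_eq_one a b) hne

theorem Representation.finrank_ker_ofMulAction_sub_one {K G α : Type*} [Field K] [Group G]
    [MulAction G α] [Finite α] (g : G) :
    finrank K (ker (Representation.ofMulAction K G α g - 1)) =
      Nat.card (Quot fun x y : α => ∃ m : ℤ, y = g ^ m • x) := by
  set r := fun x y : α => ∃ m : ℤ, y = g ^ m • x
  have : Fintype (Quot r) := Fintype.ofFinite _
  let Φ : (Quot r → K) →ₗ[K] MonoidAlgebra K α :=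
    (MonoidAlgebra.coeffLinearEquiv K).symm.toLinearMap ∘ₗ
      (Finsupp.linearEquivFunOnFinite K K α).symm.toLinearMap ∘ₗ funLeft K K (Quot.mk r)
  have hΦ : ∀ φ x, (Φ φ).coeff x = φ (Quot.mk r x) := fun _ _ => rfl
  have hinj : Function.Injective Φ := fun φ ψ h =>
    funext <| Quot.ind fun x => by rw [← hΦ φ, ← hΦ ψ, h]
  have hker : ∀ f, f ∈ ker (Representation.ofMulAction K G α g - 1) ↔
      ∀ x, f.coeff (g⁻¹ • x) = f.coeff x := by
    intro f
    rw [mem_ker, LinearMap.sub_apply, Module.End.one_apply, sub_eq_zero,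
      ← MonoidAlgebra.coeff_inj, DFunLike.ext_iff]
    simp only [Representation.coeff_ofMulAction]
  have hrange : range Φ = ker (Representation.ofMulAction K G α g - 1) := by
    ext f
    rw [hker, mem_range]
    constructor
    · rintro ⟨φ, rfl⟩ x
      rw [hΦ, hΦ]
      exact congrArg φ (Quot.sound ⟨-1, by rw [zpow_neg_one]⟩).symm
    · intro hf
      have hzpow : ∀ (m : ℤ) x, f.coeff (g ^ m • x) = f.coeff x := by
        intro m
        induction m using Int.induction_on with
        | zero => simp
        | succ i ih => intro x; rw [zpow_add_one, mul_smul, ih, ← hf, inv_smul_smul]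
        | pred i ih => intro x; rw [zpow_sub_one, mul_smul, ih, hf]
      refine ⟨Quot.lift f.coeff ?_,
        MonoidAlgebra.coeff_injective (Finsupp.ext fun x => hΦ _ x)⟩
      rintro x _ ⟨m, rfl⟩
      exact (hzpow m x).symm
  rw [← hrange, LinearMap.finrank_range_of_inj hinj, Module.finrank_fintype_fun_eq_card,
    Nat.card_eq_fintype_card]

theorem MonoidAlgebra.finrank_eq_card {K α : Type*} [Field K] [Fintype α] :
    finrank K (MonoidAlgebra K α) = Fintype.card α :=
  (MonoidAlgebra.coeffLinearEquiv K).finrank_eq.trans (Module.finrank_finsupp_self K)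

theorem Representation.smul_eq_of_ofMulAction_eq_one {K G α : Type*} [Semiring K] [Nontrivial K]
    [Monoid G] [MulAction G α] {g : G} (h : Representation.ofMulAction K G α g = 1) (x : α) :
    g • x = x := by
  have hx := LinearMap.congr_fun h (MonoidAlgebra.single x 1)
  rwa [Representation.ofMulAction_single, Module.End.one_apply,
    MonoidAlgebra.single_left_inj one_ne_zero] at hx

theorem Subgroup.mem_normalCore_of_ofMulAction_eq_one {K G : Type*} [Semiring K] [Nontrivial K]
    [Group G] {H : Subgroup G} {g : G} (h : Representation.ofMulAction K G (G ⧸ H) g = 1) :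
    g ∈ H.normalCore := by
  rw [Subgroup.normalCore_eq_ker, MonoidHom.mem_ker]
  exact Equiv.ext (Representation.smul_eq_of_ofMulAction_eq_one h)

section Induced

variable {k G V : Type*} [CommRing k] [Group G] {N : Subgroup G} [AddCommGroup V] [Module k V]

theorem exists_mem_indCarrier_eq_zero_off (σ : Representation k N V) (v : V) :
    ∃ f ∈ indCarrier N σ, f 1 = v ∧ ∀ x ∉ N, f x = 0 := by
  classical
  refine ⟨fun x => if h : x ∈ N then σ ⟨x, h⟩ v else 0, ?_,
    (dif_pos N.one_mem).trans (LinearMap.congr_fun σ.map_one v), fun x hx => dif_neg hx⟩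
  intro n x
  dsimp only
  by_cases hx : x ∈ N
  · rw [dif_pos hx, dif_pos (N.mul_mem n.2 hx), ← Module.End.mul_apply, ← map_mul]
    rfl
  · rw [dif_neg hx, dif_neg fun h => hx (by simpa using N.mul_mem (N.inv_mem n.2) h), map_zero]

theorem mem_of_indRep_eq_one [Nontrivial V] {σ : Representation k N V} {x : G}
    (h : indRep N σ x = 1) : x ∈ N := by
  by_contra hx
  obtain ⟨v, hv⟩ := exists_ne (0 : V)
  obtain ⟨f, hf, hf1, hf0⟩ := exists_mem_indCarrier_eq_zero_off σ v
  have h1 :=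
    congrArg (fun F : indCarrier N σ => (F : G → V) 1) (LinearMap.congr_fun h ⟨f, hf⟩)
  simp only [indRep, MonoidHom.coe_mk, OneHom.coe_mk, LinearMap.coe_mk, AddHom.coe_mk, one_mul,
    Module.End.one_apply, hf1, hf0 x hx] at h1
  exact hv h1.symm

theorem mem_normalCore_of_indRep_eq_one [Nontrivial V] {σ : Representation k N V} {x : G}
    (h : indRep N σ x = 1) : x ∈ N.normalCore := fun g =>
  mem_of_indRep_eq_one (by rw [map_mul, map_mul, h, mul_one, ← map_mul, mul_inv_cancel, map_one])

end Induced

theorem multiplicities_ge_two_of_not_quasiregular_general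
    {G : Type*} [Group G] [Fintype G]
    (g_r g_u : G)
    (c : G) (hc : c = g_r * g_u * g_r⁻¹ * g_u⁻¹)
    (H : Subgroup G)
    (hnqr : ∃ g : G, g * c * g⁻¹ ∉ (Subgroup.normalizer (H : Set G)))
    [Fintype (G ⧸ (Subgroup.normalizer (H : Set G)))] [DecidableEq (G ⧸ (Subgroup.normalizer (H : Set G)))]
    (ℓ₀ : ℕ)
    (hℓ₀ : ℓ₀ = (Subgroup.normalizer (H : Set G)).index -
      Nat.card (Quot (fun x y : G ⧸ (Subgroup.normalizer (H : Set G)) => ∃ m : ℤ, y = c ^ m • x))) :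
    Equiv.Perm.sign (MulAction.toPerm c : Equiv.Perm (G ⧸ (Subgroup.normalizer (H : Set G)))) = 1 ∧
    2 ≤ ℓ₀ ∧
    ∀ (V : Type) (_ : AddCommGroup V) (_ : Module ℂ V) (_ : FiniteDimensional ℂ V)
      (ρ : Representation ℂ (↥(Subgroup.normalizer (H : Set G)) ⧸ H.subgroupOf (Subgroup.normalizer (H : Set G))) V),
      IsIrreducibleRep ρ →
      2 ≤ finrank ℂ
            ↥(indCarrier (Subgroup.normalizer (H : Set G))
              (ρ.comp (QuotientGroup.mk' (H.subgroupOf (Subgroup.normalizer (H : Set G))))))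
          - finrank ℂ
            ↥(LinearMap.ker
              (indRep (Subgroup.normalizer (H : Set G))
                (ρ.comp (QuotientGroup.mk' (H.subgroupOf (Subgroup.normalizer (H : Set G))))) c - 1)) := by
  rw [← commutatorElement_def] at hc
  subst hc
  obtain ⟨g, hg⟩ := hnqr
  have hcore : ⁅g_r, g_u⁆ ∉ (Subgroup.normalizer (H : Set G)).normalCore := fun h => hg (h g)
  refine ⟨(Equiv.Perm.sign.comp (MulAction.toPermHom G _)).map_commutatorElement_eq_one g_r g_u,
    ?_, ?_⟩
  · rw [hℓ₀, ← Representation.finrank_ker_ofMulAction_sub_one (K := ℂ), Subgroup.index,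
      Nat.card_eq_fintype_card, ← MonoidAlgebra.finrank_eq_card (K := ℂ)]
    exact Representation.two_le_finrank_sub_finrank_ker_commutatorElement_sub_one
      (Representation.ofMulAction ℂ G _)
      fun h => hcore (Subgroup.mem_normalCore_of_ofMulAction_eq_one h)
  · intro V _ _ _ ρ hρ
    have : Nontrivial V := hρ.1
    exact Representation.two_le_finrank_sub_finrank_ker_commutatorElement_sub_one
      (indRep _ (ρ.comp (QuotientGroup.mk' _)))
      fun h => hcore (mem_normalCore_of_indRep_eq_one h)

/-- **Non-quasiregular origamis: all multiplicities are at least 2**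
(Matheus–Yoccoz–Zmiaikou, Corollary 3.10). Let `G` be a finite group generated by
`g_r, g_u`, let `c = g_r g_u g_r⁻¹ g_u⁻¹`, let `H` be a core-free subgroup of `G`
and `N` the normalizer of `H`. Assume that some conjugate `g c g⁻¹` does not lie in
`N`. Then (i) the permutation of `G/N` induced by `c` is even, and
`ℓ₀ = [G:N] - #(orbits)` is at least `2`; (ii) for every irreducible complex
representation `ρ` of `N/H`, the codimension of the fixed subspace of `ψ c`, where
`ψ` is the representation of `G` induced from the inflation of `ρ` to `N`, is at
least `2`. -/
theorem multiplicities_ge_two_of_not_quasiregular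
    {G : Type*} [Group G] [Fintype G]
    (g_r g_u : G) (hgen : Subgroup.closure ({g_r, g_u} : Set G) = ⊤)
    (c : G) (hc : c = g_r * g_u * g_r⁻¹ * g_u⁻¹)
    (H : Subgroup G)
    (hcorefree : ∀ K : Subgroup G, K ≤ H → K.Normal → K = ⊥)
    (hnqr : ∃ g : G, g * c * g⁻¹ ∉ (Subgroup.normalizer (H : Set G)))
    [Fintype (G ⧸ (Subgroup.normalizer (H : Set G)))] [DecidableEq (G ⧸ (Subgroup.normalizer (H : Set G)))]
    (ℓ₀ : ℕ)
    (hℓ₀ : ℓ₀ = (Subgroup.normalizer (H : Set G)).index -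
      Nat.card (Quot (fun x y : G ⧸ (Subgroup.normalizer (H : Set G)) => ∃ m : ℤ, y = c ^ m • x))) :
    Equiv.Perm.sign (MulAction.toPerm c : Equiv.Perm (G ⧸ (Subgroup.normalizer (H : Set G)))) = 1 ∧
    2 ≤ ℓ₀ ∧
    ∀ (V : Type) (_ : AddCommGroup V) (_ : Module ℂ V) (_ : FiniteDimensional ℂ V)
      (ρ : Representation ℂ (↥(Subgroup.normalizer (H : Set G)) ⧸ H.subgroupOf (Subgroup.normalizer (H : Set G))) V),
      IsIrreducibleRep ρ →
      2 ≤ finrank ℂ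
            ↥(indCarrier (Subgroup.normalizer (H : Set G))
              (ρ.comp (QuotientGroup.mk' (H.subgroupOf (Subgroup.normalizer (H : Set G))))))
          - finrank ℂ
            ↥(LinearMap.ker
              (indRep (Subgroup.normalizer (H : Set G))
                (ρ.comp (QuotientGroup.mk' (H.subgroupOf (Subgroup.normalizer (H : Set G))))) c - 1)) :=
  multiplicities_ge_two_of_not_quasiregular_general g_r g_u c hc H hnqr ℓ₀ hℓ₀
end
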